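/- Nonreciprocal clustering satisfies the Axiom of Value: for a two-node network X = {p, q} with A_X(p,q) = α and A_X(q,p) = β, the nonreciprocal ultrametric satisfies u^{NR}_X(p,q) = max(α, β). -/

import Mathlib

/-- Maximum dissimilarity over consecutive links of a chain (list of nodes). -/
def listCost {X : Type*} (A : X → X → ℝ) (l : List X) : ℝ :=
  (l.zip l.tail).foldr (fun p r => max (A p.1 p.2) r) 0

/-- Minimum over chains from `x` to `x'` of the maximum link cost. -/
noncomputable def minChainCost {X : Type*} (A : X → X → ℝ) (x x' : X) : ℝ :=
  sInf {c : ℝ | ∃ l : List X, l.head? = some x ∧ l.getLast? = some x' ∧ listCost A l = c}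

/-- Symmetrized dissimilarity Ā. -/
def symDis {X : Type*} (A : X → X → ℝ) (x x' : X) : ℝ := max (A x x') (A x' x)

/-- Reciprocal ultrametric. -/
noncomputable def uR {X : Type*} (A : X → X → ℝ) (x x' : X) : ℝ := minChainCost (symDis A) x x'

/-- Nonreciprocal ultrametric. -/
noncomputable def uNR {X : Type*} (A : X → X → ℝ) (x x' : X) : ℝ :=
  max (minChainCost A x x') (minChainCost A x' x)

/-- A (finite, asymmetric) network dissimilarity: nonnegative, vanishing exactly on the diagonal. -/
def IsNetwork {X : Type*} (A : X → X → ℝ) : Prop :=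
  (∀ x x', 0 ≤ A x x') ∧ (∀ x x', A x x' = 0 ↔ x = x')

/-- Ultrametric: nonnegative, symmetric, identity of indiscernibles, strong triangle inequality. -/
def IsUltra {X : Type*} (u : X → X → ℝ) : Prop :=
  (∀ x x', 0 ≤ u x x') ∧ (∀ x x', u x x' = u x' x) ∧
  (∀ x x', u x x' = 0 ↔ x = x') ∧
  (∀ x x' x'', u x x' ≤ max (u x x'') (u x'' x'))

/-!
A chain from `p` to `q ≠ p` must, at some link, leave `{p}`; in a two-point network that link is
`p → q`, so every chain costs at least `A p q`, while the chain `[p, q]` costs exactly `A p q`.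
Hence each directed minimax cost is the direct dissimilarity, and `uNR` is their maximum.
-/

section Chains

variable {X : Type*} (A : X → X → ℝ)

@[simp]
lemma listCost_cons_cons (x y : X) (l : List X) :
    listCost A (x :: y :: l) = max (A x y) (listCost A (y :: l)) := by
  simp [listCost]

@[simp]
lemma listCost_pair (x y : X) : listCost A [x, y] = max (A x y) 0 := by
  simp [listCost]

lemma listCost_nonneg (l : List X) : 0 ≤ listCost A l := by
  unfold listCost
  induction l.zip l.tail with
  | nil => exact le_rfl
  | cons _ _ ih => exact le_max_of_le_right ih

lemma exists_exit_le_listCost (S : Set X) {y : X} (hy : y ∉ S) :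
    ∀ (l : List X) {x : X}, l.head? = some x → x ∈ S → l.getLast? = some y →
      ∃ a ∈ S, ∃ b ∉ S, A a b ≤ listCost A l
  | [], _, hx, _, _ => by simp at hx
  | [x'], x, hx, hxS, hlast => by
    simp only [List.head?_cons, List.getLast?_singleton, Option.some.injEq] at hx hlast
    exact absurd (hlast ▸ hx ▸ hxS) hy
  | x' :: z :: l, x, hx, hxS, hlast => by
    simp only [List.head?_cons, Option.some.injEq] at hx
    subst hx
    rw [listCost_cons_cons]
    by_cases hzS : z ∈ S
    · obtain ⟨a, haS, b, hbS, hab⟩ :=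
        exists_exit_le_listCost S hy (z :: l) rfl hzS (by simpa using hlast)
      exact ⟨a, haS, b, hbS, le_max_of_le_right hab⟩
    · exact ⟨x', hxS, z, hzS, le_max_left _ _⟩

lemma minChainCost_le_listCost {x y : X} {l : List X} (hx : l.head? = some x)
    (hy : l.getLast? = some y) : minChainCost A x y ≤ listCost A l :=
  csInf_le ⟨0, by rintro _ ⟨l', -, -, rfl⟩; exact listCost_nonneg A l'⟩ ⟨l, hx, hy, rfl⟩

lemma le_minChainCost {x y : X} {c : ℝ}
    (h : ∀ l : List X, l.head? = some x → l.getLast? = some y → c ≤ listCost A l) :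
    c ≤ minChainCost A x y :=
  le_csInf ⟨_, [x, y], rfl, rfl, rfl⟩ (by rintro _ ⟨l, hx, hy, rfl⟩; exact h l hx hy)

lemma minChainCost_eq_of_two_points {p q : X} (hpq : p ≠ q) (htwo : ∀ x : X, x = p ∨ x = q)
    (hA : 0 ≤ A p q) : minChainCost A p q = A p q := by
  refine le_antisymm ?_ (le_minChainCost A fun l hp hq => ?_)
  · calc minChainCost A p q ≤ listCost A [p, q] := minChainCost_le_listCost A rfl rfl
      _ = A p q := by rw [listCost_pair, max_eq_left hA]
  · obtain ⟨a, rfl, b, hb, hab⟩ :=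
      exists_exit_le_listCost A {p} (Set.mem_singleton_iff.not.mpr hpq.symm) l hp rfl hq
    rwa [(htwo b).resolve_left hb] at hab

end Chains

theorem nonreciprocal_axiom_of_value_general {X : Type*} (A : X → X → ℝ)
    (hA : IsNetwork A) (p q : X) (hpq : p ≠ q) (htwo : ∀ x : X, x = p ∨ x = q)
    (α β : ℝ) (hα : A p q = α) (hβ : A q p = β) :
    uNR A p q = max α β := by
  have htwo' : ∀ x : X, x = q ∨ x = p := fun x => (htwo x).symm
  rw [uNR, minChainCost_eq_of_two_points A hpq htwo (hA.1 p q),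
    minChainCost_eq_of_two_points A hpq.symm htwo' (hA.1 q p), hα, hβ]

theorem nonreciprocal_axiom_of_value {X : Type*} [Fintype X] (A : X → X → ℝ)
    (hA : IsNetwork A) (p q : X) (hpq : p ≠ q) (htwo : ∀ x : X, x = p ∨ x = q)
    (α β : ℝ) (hα : A p q = α) (hβ : A q p = β) :
    uNR A p q = max α β :=
  nonreciprocal_axiom_of_value_general A hA p q hpq htwo α β hα hβ
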